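/- If I is additionally strongly linearizable and C is a reachable bivalent configuration of algorithm A, then no operation has completed in C. -/

import Mathlib

/-!
A model of asynchronous message-passing systems with `n` processes, following
Fischer–Lynch–Paterson: in a step `(p, m)` process `p` receives message `m`
(`none` if no message), changes its local state, and sends a finite set of messages.
Object implementations encode invocations and responses of operations as changes
of the state of the invoking process.
-/

namespace MP

/-- A step `(p, m)`: process `p` takes a step in which it attempts to receive a
message; it receives `m`, where `m = none` means it receives no message. -/
abbrev Step (n : ℕ) (Msg : Type) : Type := Fin n × Option Msg

/-- An operation event: the invocation of an operation `o`, or the response of `o`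
with return value `v`. -/
inductive Event (Op Val : Type) : Type
  | inv (o : Op)
  | res (o : Op) (v : Val)
deriving DecidableEq

/-- The operation an event belongs to. -/
def Event.opOf {Op Val : Type} : Event Op Val → Op
  | .inv o => o
  | .res o _ => o

/-- A (deterministic) message-passing implementation for `n` processes, of an object
with operations `Op` returning values in `Val`.  In each step a process receives at
most one message, changes its local state via `trans`, and sends a finite list of
messages; invocations and responses of operations are encoded (via `eventOf`) as
changes of the state of the invoking process.  `procOf o` is the process that may
invoke operation `o`. -/
structure Impl (n : ℕ) (Op Val : Type) : Type 1 where
  Msg : Type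
  PState : Type
  init : Fin n → PState
  trans : Fin n → PState → Option Msg → PState × List (Fin n × Msg)
  eventOf : Fin n → PState → PState → Option (Event Op Val)
  procOf : Op → Fin n

variable {n : ℕ} {Op Val : Type}

/-- A configuration: the local states of all processes together with the message
buffer (the multiset of all messages sent but not yet received, tagged with their
destination process). -/
structure Config (I : Impl n Op Val) : Type where
  states : Fin n → I.PState
  buffer : Multiset (Fin n × I.Msg)

/-- The initial configuration: all processes in their initial states, empty buffer. -/
def initConfig (I : Impl n Op Val) : Config I :=
  ⟨I.init, 0⟩

/-- A step `(p, some m)` is applicable to `C` iff `m` is in the buffer for `p`;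
a step `(p, none)` is always applicable. -/
def Applicable (I : Impl n Op Val) (C : Config I) (e : Step n I.Msg) : Prop :=
  match e.2 with
  | none => True
  | some m => (e.1, m) ∈ C.buffer

open scoped Classical in
/-- The configuration resulting from applying step `e` to configuration `C`:
the stepping process changes state, the received message (if any) is removed from
the buffer, and the sent messages are added to it. -/
noncomputable def applyStep (I : Impl n Op Val) (C : Config I) (e : Step n I.Msg) :
    Config I :=
  { states := Function.update C.states e.1 (I.trans e.1 (C.states e.1) e.2).1
    buffer :=
      (match e.2 with
        | none => C.buffer
        | some m => C.buffer.erase (e.1, m))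
      + ((I.trans e.1 (C.states e.1) e.2).2 : Multiset (Fin n × I.Msg)) }

/-- A finite history (sequence of steps) `H` is applicable to `C` if each of its
steps is applicable in turn. -/
def ApplicableHist (I : Impl n Op Val) : Config I → List (Step n I.Msg) → Prop
  | _, [] => True
  | C, e :: H => Applicable I C e ∧ ApplicableHist I (applyStep I C e) H

/-- `H(C)`: the configuration obtained by applying the finite history `H` to `C`. -/
noncomputable def applyHist (I : Impl n Op Val) : Config I → List (Step n I.Msg) → Config I
  | C, [] => C
  | C, e :: H => applyHist I (applyStep I C e) H

/-- The event (if any) encoded by the state change of the process taking step `e`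
from configuration `C`. -/
noncomputable def stepEvent (I : Impl n Op Val) (C : Config I) (e : Step n I.Msg) :
    Option (Event Op Val) :=
  I.eventOf e.1 (C.states e.1) ((applyStep I C e).states e.1)

/-- The operation-level history (sequence of invocation/response events) of the run
in which `H` is applied to `C`. -/
noncomputable def runEvents (I : Impl n Op Val) :
    Config I → List (Step n I.Msg) → List (Event Op Val)
  | _, [] => []
  | C, e :: H => (stepEvent I C e).toList ++ runEvents I (applyStep I C e) H

/-- The set of (finite) histories of implementation `I`: all finite histories
applicable to the initial configuration.  (This set is prefix-closed.) -/
def Histories (I : Impl n Op Val) : Set (List (Step n I.Msg)) :=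
  {H | ApplicableHist I (initConfig I) H}

/-- The operation-level events of a history `H` of `I`. -/
noncomputable def events (I : Impl n Op Val) (H : List (Step n I.Msg)) :
    List (Event Op Val) :=
  runEvents I (initConfig I) H

/-- Operation `o` has been invoked in the event history `L`. -/
def Invoked (o : Op) (L : List (Event Op Val)) : Prop := Event.inv o ∈ L

/-- Operation `o` is complete in the event history `L`: `L` contains both its
invocation and a response for it. -/
def Completed (o : Op) (L : List (Event Op Val)) : Prop :=
  Event.inv o ∈ L ∧ ∃ v, Event.res o v ∈ L

/-- Operation `o` is pending in `L`: invoked but with no response. -/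
def Pending (o : Op) (L : List (Event Op Val)) : Prop :=
  Event.inv o ∈ L ∧ ∀ v, Event.res o v ∉ L

/-- `o` precedes `o'` in `L`: a response of `o` occurs (strictly) before the
invocation of `o'`. -/
def Precedes (L : List (Event Op Val)) (o o' : Op) : Prop :=
  ∃ (i j : ℕ) (hi : i < L.length) (hj : j < L.length),
    i < j ∧ (∃ v, L.get ⟨i, hi⟩ = Event.res o v) ∧ L.get ⟨j, hj⟩ = Event.inv o'

/-- A sequential event history: invocations immediately followed by their matching
responses, possibly ending with a single pending invocation (no two operations are
concurrent). -/
def Sequential : List (Event Op Val) → Prop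
  | [] => True
  | [Event.inv _] => True
  | Event.inv o :: Event.res o' _ :: L => o = o' ∧ Sequential L
  | _ => False

/-- `x` occurs at most once in the list `L`. -/
def AtMostOnce {β : Type _} (x : β) (L : List β) : Prop :=
  ∀ (i j : ℕ) (hi : i < L.length) (hj : j < L.length),
    L.get ⟨i, hi⟩ = x → L.get ⟨j, hj⟩ = x → i = j

/-- Operation `o` has at most one response event in `L`. -/
def AtMostOneRes (o : Op) (L : List (Event Op Val)) : Prop :=
  ∀ (i j : ℕ) (hi : i < L.length) (hj : j < L.length) (v v' : Val),
    L.get ⟨i, hi⟩ = Event.res o v → L.get ⟨j, hj⟩ = Event.res o v' → i = j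

/-- Well-formedness of an implementation: in every history, each operation is
invoked at most once, responds at most once, and responses follow invocations. -/
def WellFormed (I : Impl n Op Val) : Prop :=
  ∀ H ∈ Histories I,
    (∀ o : Op, AtMostOnce (Event.inv o) (events I H)) ∧
    (∀ o : Op, AtMostOneRes o (events I H)) ∧
    (∀ (o : Op) (v : Val), Event.res o v ∈ events I H → Event.inv o ∈ events I H)

/-- `L'` is a completion of the event history `L`: the events of a subset (`removed`)
of the pending operations of `L` are removed, and the remaining pending operations
are completed by appending responses `R` for them. -/
def IsCompletion (L L' : List (Event Op Val)) : Prop :=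
  ∃ (removed : Op → Bool) (R : List (Event Op Val)),
    (∀ o, removed o = true → Pending o L) ∧
    (∀ ev ∈ R, ∃ (o : Op) (v : Val), ev = Event.res o v ∧ Pending o L ∧ removed o = false) ∧
    (∀ o : Op, Pending o L → removed o = false → ∃ v, Event.res o v ∈ R) ∧
    (R.map Event.opOf).Nodup ∧
    L' = L.filter (fun ev => !removed ev.opOf) ++ R

/-- `f` is a linearization function for (the set of histories of) `I` with respect to
the sequential specification `Spec`: it maps each history `H` of `I` to a sequential
history `f H` that (1) has exactly the same operations (with the same responses) as
some completion of the events of `H`, (2) respects precedence, and (3) conforms to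
`Spec`. -/
def IsLinearizationFn (I : Impl n Op Val) (Spec : List (Event Op Val) → Prop)
    (f : List (Step n I.Msg) → List (Event Op Val)) : Prop :=
  ∀ H ∈ Histories I,
    Sequential (f H) ∧
    (∃ L', IsCompletion (events I H) L' ∧
      (∀ ev : Event Op Val, ev ∈ f H ↔ ev ∈ L') ∧
      (∀ o o' : Op, Precedes L' o o' → Precedes (f H) o o')) ∧
    Spec (f H)

/-- `I` is linearizable with respect to the sequential specification `Spec`. -/
def Linearizable (I : Impl n Op Val) (Spec : List (Event Op Val) → Prop) : Prop :=
  ∃ f, IsLinearizationFn I Spec f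

/-- `I` is strongly linearizable: there is a linearization function mapping
prefixes of histories to prefixes of their linearizations. -/
def StronglyLinearizable (I : Impl n Op Val) (Spec : List (Event Op Val) → Prop) : Prop :=
  ∃ f, IsLinearizationFn I Spec f ∧
    ∀ G H, G ∈ Histories I → H ∈ Histories I → G <+: H → f G <+: f H

/-- The finite history consisting of the first `k` steps of an infinite history `S`. -/
def prefixSteps {β : Type _} (S : ℕ → β) (k : ℕ) : List β :=
  (List.range k).map S

/-- The infinite history `S` is applicable to `C`: every step is applicable to the
configuration reached by the preceding steps. -/
def InfApplicable (I : Impl n Op Val) (C : Config I) (S : ℕ → Step n I.Msg) : Prop :=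
  ∀ k, Applicable I (applyHist I C (prefixSteps S k)) (S k)

/-- Process `p` is correct in the infinite history `S`: it takes infinitely many steps. -/
def CorrectProc {Msg : Type} (p : Fin n) (S : ℕ → Step n Msg) : Prop :=
  ∀ k, ∃ k' ≥ k, (S k').1 = p

/-- At most one process crashes (i.e., takes only finitely many steps) in `S`. -/
def AtMostOneCrash {Msg : Type} (S : ℕ → Step n Msg) : Prop :=
  ∀ p q : Fin n, ¬ CorrectProc p S → ¬ CorrectProc q S → p = q

/-- Every message sent to a correct process is eventually received. -/
def FairDelivery (I : Impl n Op Val) (C : Config I) (S : ℕ → Step n I.Msg) : Prop :=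
  ∀ (k : ℕ) (p : Fin n) (m : I.Msg), CorrectProc p S →
    (p, m) ∈ (applyHist I C (prefixSteps S k)).buffer →
    ∃ k' ≥ k, S k' = (p, some m)

/-- `I` is 1-resilient lock-free: for every reachable configuration (reached by a
history `H₀`) with a pending operation by process `p`, and every infinite history
applicable to it in which at most one process crashes, `p` is correct, and every
message sent to a correct process is eventually received, some finite prefix
completes an operation not yet complete. -/
def OneResilientLockFree (I : Impl n Op Val) : Prop :=
  ∀ H₀ ∈ Histories I, ∀ (p : Fin n) (o : Op),
    I.procOf o = p → Pending o (events I H₀) →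
    ∀ S : ℕ → Step n I.Msg,
      InfApplicable I (applyHist I (initConfig I) H₀) S →
      AtMostOneCrash S → CorrectProc p S →
      FairDelivery I (applyHist I (initConfig I) H₀) S →
      ∃ (k : ℕ) (o' : Op),
        Completed o' (events I (H₀ ++ prefixSteps S k)) ∧ ¬ Completed o' (events I H₀)

end MP

namespace MP

/-- The operations of a Test-or-Set (ToS) object: a single TEST and a single SET. -/
inductive ToSOp : Type
  | test
  | set
deriving DecidableEq

/-- Sequential specification of Test-or-Set (`true` codes the bit 1, `false` codes 0):
a TEST returns 1 iff a SET occurs before it, and 0 otherwise. -/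
def ToSSpec (L : List (Event ToSOp Bool)) : Prop :=
  ∀ (i : ℕ) (hi : i < L.length) (v : Bool), L.get ⟨i, hi⟩ = Event.res ToSOp.test v →
    (v = true ↔ ∃ (j : ℕ) (hj : j < L.length), j < i ∧ L.get ⟨j, hj⟩ = Event.inv ToSOp.set)

variable {n : ℕ}

/-- The system obtained by running algorithm `A` on a ToS implementation `I`:
the distinguished process `p0` invokes TEST (as its first step), the distinguished
process `p1 ≠ p0` invokes SET (as its first step), each operation is invoked only
once, and the other processes only help. -/
structure ToSAlg (I : Impl n ToSOp Bool) (p0 p1 : Fin n) : Prop where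
  distinct : p0 ≠ p1
  proc_test : I.procOf ToSOp.test = p0
  proc_set : I.procOf ToSOp.set = p1
  events_own : ∀ (p : Fin n) (s s' : I.PState) (ev : Event ToSOp Bool),
    I.eventOf p s s' = some ev → I.procOf ev.opOf = p
  wellFormed : WellFormed I
  invokes_test : ∀ m : Option I.Msg,
    I.eventOf p0 (I.init p0) (I.trans p0 (I.init p0) m).1 = some (Event.inv ToSOp.test)
  invokes_set : ∀ m : Option I.Msg,
    I.eventOf p1 (I.init p1) (I.trans p1 (I.init p1) m).1 = some (Event.inv ToSOp.set)

/-- The TEST operation has returned the value `v` in the history `H` (applied to the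
initial configuration). -/
def TestReturned (I : Impl n ToSOp Bool) (H : List (Step n I.Msg)) (v : Bool) : Prop :=
  Event.res ToSOp.test v ∈ events I H

/-- The configuration reached by the history `H₀` is `v`-valent: there is no finite
history `H` applicable to it such that the TEST operation has returned `1 - v`. -/
def ToSValent (I : Impl n ToSOp Bool) (H₀ : List (Step n I.Msg)) (v : Bool) : Prop :=
  (H₀ ∈ Histories I) ∧
  ∀ H : List (Step n I.Msg), (H₀ ++ H) ∈ Histories I → ¬ TestReturned I (H₀ ++ H) (!v)

/-- The configuration reached by `H₀` is bivalent: neither 0-valent nor 1-valent. -/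
def ToSBivalent (I : Impl n ToSOp Bool) (H₀ : List (Step n I.Msg)) : Prop :=
  (H₀ ∈ Histories I) ∧ ¬ ToSValent I H₀ false ∧ ¬ ToSValent I H₀ true

end MP

/-!
Strong linearizability fixes, at every history, a prefix of the linearization of all of its
extensions. If SET had completed in the bivalent configuration `C`, it would already occur in
that fixed prefix, while the TEST response of a run from `C` in which TEST returns 0 occurs
after it, since it cannot be in the prefix (the same prefix is shared by a run from `C` in
which TEST returns 1). So TEST would return 0 after a SET, against the specification. TEST
itself cannot have completed in `C`, since its response would make `C` univalent.
-/

namespace MP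

section Linearization

variable {n : ℕ} {Op Val : Type}

theorem runEvents_append (I : Impl n Op Val) (C : Config I) (A B : List (Step n I.Msg)) :
    runEvents I C (A ++ B) = runEvents I C A ++ runEvents I (applyHist I C A) B := by
  induction A generalizing C with
  | nil => rfl
  | cons e A ih => simp [runEvents, applyHist, ih]

theorem events_prefix_append (I : Impl n Op Val) (H₀ H : List (Step n I.Msg)) :
    events I H₀ <+: events I (H₀ ++ H) :=
  ⟨_, (runEvents_append I (initConfig I) H₀ H).symm⟩

theorem AtMostOneRes.val_eq {o : Op} {v v' : Val} {L : List (Event Op Val)}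
    (h : AtMostOneRes o L) (hv : Event.res o v ∈ L) (hv' : Event.res o v' ∈ L) : v = v' := by
  obtain ⟨i, hi⟩ := List.mem_iff_get.mp hv
  obtain ⟨j, hj⟩ := List.mem_iff_get.mp hv'
  obtain rfl : i = j := Fin.ext (h i j i.2 j.2 v v' hi hj)
  exact Event.res.inj (hi.symm.trans hj) |>.2

theorem IsCompletion.mem_of_not_pending {L L' : List (Event Op Val)} (hc : IsCompletion L L')
    {ev : Event Op Val} (hev : ev ∈ L) (hnp : ¬ Pending ev.opOf L) : ev ∈ L' := by
  obtain ⟨removed, R, hremoved, -, -, -, rfl⟩ := hc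
  have hkept : removed ev.opOf = false := by
    by_contra h
    exact hnp (hremoved _ (Bool.not_eq_false _ ▸ h))
  exact List.mem_append_left R (List.mem_filter.mpr ⟨hev, by simp [hkept]⟩)

theorem IsCompletion.res_mem_or_pending {L L' : List (Event Op Val)} (hc : IsCompletion L L')
    {o : Op} {v : Val} (hv : Event.res o v ∈ L') : Event.res o v ∈ L ∨ Pending o L := by
  obtain ⟨removed, R, -, hR, -, -, rfl⟩ := hc
  rcases List.mem_append.mp hv with hv | hv
  · exact Or.inl (List.mem_filter.mp hv).1
  · obtain ⟨o', v', heq, hpending, -⟩ := hR _ hv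
    obtain ⟨rfl, -⟩ := Event.res.inj heq
    exact Or.inr hpending

variable {I : Impl n Op Val} {Spec : List (Event Op Val) → Prop}
  {f : List (Step n I.Msg) → List (Event Op Val)} {H : List (Step n I.Msg)}

theorem IsLinearizationFn.mem_of_not_pending (hf : IsLinearizationFn I Spec f)
    (hH : H ∈ Histories I) {ev : Event Op Val} (hev : ev ∈ events I H)
    (hnp : ¬ Pending ev.opOf (events I H)) : ev ∈ f H := by
  obtain ⟨-, ⟨L', hc, hmem, -⟩, -⟩ := hf H hH
  exact (hmem ev).mpr (hc.mem_of_not_pending hev hnp)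

theorem IsLinearizationFn.inv_mem_of_completed (hf : IsLinearizationFn I Spec f)
    (hH : H ∈ Histories I) {o : Op} (ho : Completed o (events I H)) : Event.inv o ∈ f H :=
  hf.mem_of_not_pending hH ho.1 fun hp ↦ hp.2 _ ho.2.choose_spec

theorem IsLinearizationFn.res_mem (hf : IsLinearizationFn I Spec f)
    (hH : H ∈ Histories I) {o : Op} {v : Val} (hv : Event.res o v ∈ events I H) :
    Event.res o v ∈ f H :=
  hf.mem_of_not_pending hH hv fun hp ↦ hp.2 v hv

theorem IsLinearizationFn.val_eq_of_res_mem (hf : IsLinearizationFn I Spec f)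
    (hH : H ∈ Histories I) {o : Op} {v v' : Val} (hone : AtMostOneRes o (events I H))
    (hv : Event.res o v ∈ events I H) (hv' : Event.res o v' ∈ f H) : v' = v := by
  obtain ⟨-, ⟨L', hc, hmem, -⟩, -⟩ := hf H hH
  rcases hc.res_mem_or_pending ((hmem _).mp hv') with hv' | hp
  · exact hone.val_eq hv' hv
  · exact absurd hv (hp.2 v)

end Linearization

section TestOrSet

variable {n : ℕ} {I : Impl n ToSOp Bool}

theorem ToSSpec.res_test_false_not_mem_right {P T : List (Event ToSOp Bool)}
    (hspec : ToSSpec (P ++ T)) (hset : Event.inv ToSOp.set ∈ P) :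
    Event.res ToSOp.test false ∉ T := by
  intro htest
  obtain ⟨j, hj⟩ := List.mem_iff_get.mp hset
  obtain ⟨k, hk⟩ := List.mem_iff_get.mp htest
  have hlt : P.length + k < (P ++ T).length := by simp
  have hres : (P ++ T).get ⟨P.length + k, hlt⟩ = Event.res ToSOp.test false := by
    simpa [List.getElem_append_right] using hk
  have hinv : (P ++ T).get ⟨j, by simp; omega⟩ = Event.inv ToSOp.set := by
    simpa [List.getElem_append_left j.2] using hj
  exact Bool.false_ne_true <|
    (hspec _ hlt false hres).mpr ⟨j, _, Nat.lt_add_right _ j.2, hinv⟩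

theorem toSValent_of_testReturned (hwf : WellFormed I) {H₀ : List (Step n I.Msg)}
    (hH₀ : H₀ ∈ Histories I) {v : Bool} (hv : TestReturned I H₀ v) : ToSValent I H₀ v := by
  refine ⟨hH₀, fun H hH hnv ↦ ?_⟩
  have := (hwf _ hH).2.1 ToSOp.test |>.val_eq ((events_prefix_append I H₀ H).subset hv) hnv
  cases v <;> simp at this

theorem ToSBivalent.not_testReturned {H₀ : List (Step n I.Msg)} (hwf : WellFormed I)
    (hbi : ToSBivalent I H₀) (v : Bool) : ¬ TestReturned I H₀ v := by
  intro hv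
  cases v
  · exact hbi.2.1 (toSValent_of_testReturned hwf hbi.1 hv)
  · exact hbi.2.2 (toSValent_of_testReturned hwf hbi.1 hv)

theorem ToSBivalent.exists_testReturned {H₀ : List (Step n I.Msg)} (hbi : ToSBivalent I H₀)
    (v : Bool) : ∃ H, H₀ ++ H ∈ Histories I ∧ TestReturned I (H₀ ++ H) v := by
  have hnval : ¬ ToSValent I H₀ (!v) := by
    cases v
    · exact hbi.2.2
    · exact hbi.2.1
  by_contra! h
  exact hnval ⟨hbi.1, fun H hH ↦ by simpa using h H hH⟩

end TestOrSet

theorem ToS_bivalent_no_completed_op_general (n : ℕ)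
    (I : Impl n ToSOp Bool) (p0 p1 : Fin n)
    (halg : ToSAlg I p0 p1)
    (hsl : StronglyLinearizable I ToSSpec)
    (H₀ : List (Step n I.Msg)) (hbi : ToSBivalent I H₀) :
    ∀ o : ToSOp, ¬ Completed o (events I H₀) := by
  have hwf := halg.wellFormed
  rintro (_ | _) hC
  · exact hbi.not_testReturned hwf _ hC.2.choose_spec
  obtain ⟨f, hf, hprefix⟩ := hsl
  obtain ⟨H0, hH0, hret0⟩ := hbi.exists_testReturned false
  obtain ⟨H1, hH1, hret1⟩ := hbi.exists_testReturned true
  have hnot_mem : Event.res ToSOp.test false ∉ f H₀ := fun hmem ↦ by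
    have := hf.val_eq_of_res_mem hH1 ((hwf _ hH1).2.1 _) hret1
      ((hprefix _ _ hbi.1 hH1 ⟨H1, rfl⟩).subset hmem)
    cases this
  obtain ⟨T, hT⟩ := hprefix _ _ hbi.1 hH0 ⟨H0, rfl⟩
  have hspec : ToSSpec (f H₀ ++ T) := hT ▸ (hf _ hH0).2.2
  have hmem : Event.res ToSOp.test false ∈ f H₀ ++ T := hT ▸ hf.res_mem hH0 hret0
  exact hspec.res_test_false_not_mem_right (hf.inv_mem_of_completed hbi.1 hC)
    ((List.mem_append.mp hmem).resolve_left hnot_mem)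

/-- **Claim 2.** If `I` is additionally strongly linearizable and `C` is a reachable
bivalent configuration of algorithm `A` (reached by a history `H₀`), then no operation
has completed in `C`. -/
theorem ToS_bivalent_no_completed_op (n : ℕ) (hn : 2 ≤ n)
    (I : Impl n ToSOp Bool) (p0 p1 : Fin n)
    (halg : ToSAlg I p0 p1) (hlf : OneResilientLockFree I)
    (hsl : StronglyLinearizable I ToSSpec)
    (H₀ : List (Step n I.Msg)) (hbi : ToSBivalent I H₀) :
    ∀ o : ToSOp, ¬ Completed o (events I H₀) :=
  ToS_bivalent_no_completed_op_general n I p0 p1 halg hsl H₀ hbi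

end MP
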